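/- arXiv:2104.01470 — 2 statements merged into one kernel-verified Lean document; each statement's English description precedes it below -/
import Mathlib

section
/- Let 0 < μ < 1/m_φ, assume F attains a finite minimal value, and let z̄ be a local minimizer of F_μ: there is r > 0 with F_μ(z̄) ≤ F_μ(z) for all z with ‖z − z̄‖ ≤ r. If g is differentiable with L_g-Lipschitz gradient on ℝⁿ, then F(x_{μφ}(z̄)) ≤ F(x) for every x ∈ ℝⁿ with ‖x − x_{μφ}(z̄)‖ ≤ r/(μ L_g + 1); that is, x_{μφ}(z̄) is a local minimizer of F. -/
open scoped RealInnerProductSpace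

noncomputable section

/-- `ℝⁿ` with the Euclidean norm. -/
abbrev En (n : ℕ) := EuclideanSpace ℝ (Fin n)

/-- `φ` is proper: finite somewhere and never `⊥`. -/
def ProperE {n : ℕ} (φ : En n → EReal) : Prop :=
  (∃ x, φ x ≠ ⊤) ∧ ∀ x, φ x ≠ ⊥

/-- `φ` is `m`-weakly convex: `x ↦ φ x + (m/2)‖x‖²` is convex. -/
def WeaklyConvexOn {n : ℕ} (φ : En n → EReal) (m : ℝ) : Prop :=
  ∀ x y : En n, ∀ a b : ℝ, 0 ≤ a → 0 ≤ b → a + b = 1 →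
    φ (a • x + b • y) + (((m / 2) * ‖a • x + b • y‖ ^ 2 : ℝ) : EReal) ≤
      (a : EReal) * (φ x + (((m / 2) * ‖x‖ ^ 2 : ℝ) : EReal)) +
        (b : EReal) * (φ y + (((m / 2) * ‖y‖ ^ 2 : ℝ) : EReal))

/-- `Mφ` is the Moreau envelope of `φ` with parameter `μ` and `xφ` the associated
(unique) proximal mapping. -/
def IsMoreau {n : ℕ} (φ : En n → EReal) (μ : ℝ) (Mφ : En n → ℝ) (xφ : En n → En n) : Prop :=
  ∀ z : En n,
    (Mφ z : EReal) = φ (xφ z) + ((‖xφ z - z‖ ^ 2 / (2 * μ) : ℝ) : EReal) ∧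
    (∀ x, (Mφ z : EReal) ≤ φ x + ((‖x - z‖ ^ 2 / (2 * μ) : ℝ) : EReal)) ∧
    (∀ x, φ x + ((‖x - z‖ ^ 2 / (2 * μ) : ℝ) : EReal) = (Mφ z : EReal) → x = xφ z)

/-- Real-valued version, for the convex function `g`. -/
def IsMoreauR {n : ℕ} (g : En n → ℝ) (μ : ℝ) (Mg : En n → ℝ) (xg : En n → En n) : Prop :=
  ∀ z : En n,
    Mg z = g (xg z) + ‖xg z - z‖ ^ 2 / (2 * μ) ∧
    (∀ x, Mg z ≤ g x + ‖x - z‖ ^ 2 / (2 * μ)) ∧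
    (∀ x, g x + ‖x - z‖ ^ 2 / (2 * μ) = Mg z → x = xg z)

/-- `ξ ∈ ∂g(x)` for a (finite-valued) convex function `g`. -/
def ConvexSubgradAt {n : ℕ} (g : En n → ℝ) (ξ x : En n) : Prop :=
  ∀ y, g x + ⟪ξ, y - x⟫ ≤ g y

/-- `ξ ∈ ∂φ(x)` for an `m`-weakly convex `φ`: `ξ + m x` is a subgradient of the
convex function `φ + (m/2)‖·‖²` at `x`. -/
def WeakSubgradAt {n : ℕ} (φ : En n → EReal) (m : ℝ) (ξ x : En n) : Prop :=
  ∀ y, φ x + (((m / 2) * ‖x‖ ^ 2 + ⟪ξ + m • x, y - x⟫ : ℝ) : EReal) ≤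
    φ y + (((m / 2) * ‖y‖ ^ 2 : ℝ) : EReal)


/-!
The envelope `Mφ` lies below the quadratic `Mφ z̄ + ⟪μ⁻¹ • (z̄ - xφ z̄), z - z̄⟫ + ‖z - z̄‖² / (2μ)`,
while for convex differentiable `g` the envelope `Mg` lies above its tangent plane at `z̄`, whose
slope is `∇g (xg z̄) = μ⁻¹ • (z̄ - xg z̄)`. At a local minimizer `z̄` of `Mφ - Mg` the two slopes
coincide, so the proximal points agree: `xφ z̄ = xg z̄ =: x̄` and `z̄ = x̄ + μ • ∇g x̄`.
For `x` near `x̄`, the point `z = x + μ • ∇g x` stays within `r` of `z̄` because `∇g` is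
Lipschitz, and `F x̄ ≤ F_μ z̄ ≤ F_μ z ≤ F x`: in the last step the term `‖x - z‖² / (2μ)` in the
bound `Mφ z ≤ φ x + ‖x - z‖² / (2μ)` is cancelled by `Mg z ≥ g x + μ / 2 * ‖∇g x‖²`.
-/

open Set

section InnerProductSpace

variable {E : Type*} [NormedAddCommGroup E] [InnerProductSpace ℝ E]

theorem real_inner_le_young {μ : ℝ} (hμ : 0 < μ) (x y : E) :
    ⟪x, y⟫ ≤ μ / 2 * ‖x‖ ^ 2 + ‖y‖ ^ 2 / (2 * μ) := by
  have hsq := norm_sub_sq_real (μ • x) y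
  rw [norm_smul, real_inner_smul_left, Real.norm_of_nonneg hμ.le] at hsq
  have key : μ / 2 * ‖x‖ ^ 2 + ‖y‖ ^ 2 / (2 * μ) - ⟪x, y⟫ = ‖μ • x - y‖ ^ 2 / (2 * μ) := by
    rw [hsq]; field_simp; ring
  linarith [show 0 ≤ ‖μ • x - y‖ ^ 2 / (2 * μ) by positivity]

theorem norm_add_smul_sub_add_smul_le {G : E → E} {L μ : ℝ} (hμ : 0 ≤ μ)
    (hG : ∀ x y, ‖G x - G y‖ ≤ L * ‖x - y‖) (x y : E) :
    ‖(x + μ • G x) - (y + μ • G y)‖ ≤ (μ * L + 1) * ‖x - y‖ :=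
  calc ‖(x + μ • G x) - (y + μ • G y)‖ = ‖(x - y) + μ • (G x - G y)‖ := by
        rw [smul_sub]; abel_nf
    _ ≤ ‖x - y‖ + μ * ‖G x - G y‖ := by
        grw [norm_add_le, norm_smul, Real.norm_of_nonneg hμ]
    _ ≤ (μ * L + 1) * ‖x - y‖ := by nlinarith [hG x y]

theorem eq_zero_of_forall_norm_le_inner_add_sq {w : E} {C r : ℝ} (hr : 0 < r)
    (h : ∀ d : E, ‖d‖ ≤ r → 0 ≤ ⟪w, d⟫ + C * ‖d‖ ^ 2) : w = 0 := by
  have hmin : IsLocalMin (fun d : E => ⟪w, d⟫ + C * ‖d‖ ^ 2) 0 := by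
    filter_upwards [Metric.closedBall_mem_nhds (0 : E) hr] with d hd
    simpa using h d (by simpa using hd)
  have hderiv : HasFDerivAt (fun d : E => ⟪w, d⟫ + C * ‖d‖ ^ 2)
      (innerSL ℝ w + C • 2 • innerSL ℝ (0 : E)) 0 :=
    (innerSL ℝ w).hasFDerivAt.add ((hasStrictFDerivAt_norm_sq (0 : E)).hasFDerivAt.const_mul C)
  have := congrArg (· w) (hmin.hasFDerivAt_eq_zero hderiv)
  simpa using this

variable [CompleteSpace E]

theorem ConvexOn.add_inner_le_of_hasGradientAt {g : E → ℝ} (hg : ConvexOn ℝ univ g)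
    {a x : E} (ha : HasGradientAt g a x) (y : E) : g x + ⟪a, y - x⟫ ≤ g y := by
  set ℓ : ℝ →ᵃ[ℝ] E := AffineMap.lineMap x y
  have hline : ConvexOn ℝ univ (g ∘ ℓ) := hg.comp_affineMap ℓ
  have hderiv : HasDerivAt (g ∘ ℓ) ⟪a, y - x⟫ 0 := by
    have hfd : HasFDerivAt g (InnerProductSpace.toDual ℝ E a) (ℓ 0) := by
      simpa [ℓ] using hasGradientAt_iff_hasFDerivAt.mp ha
    simpa using hfd.comp_hasDerivAt (0 : ℝ) AffineMap.hasDerivAt_lineMap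
  have := hline.le_slope_of_hasDerivAt (mem_univ 0) (mem_univ 1) zero_lt_one hderiv
  simp only [slope, sub_zero, inv_one, Function.comp_apply, AffineMap.lineMap_apply_one,
    AffineMap.lineMap_apply_zero, vsub_eq_sub, smul_eq_mul, one_mul, ℓ] at this
  linarith

theorem HasGradientAt.eq_add_smul_of_forall_le {g : E → ℝ} {a x z : E} {μ : ℝ} (hμ : μ ≠ 0)
    (ha : HasGradientAt g a x)
    (hmin : ∀ y, g x + ‖x - z‖ ^ 2 / (2 * μ) ≤ g y + ‖y - z‖ ^ 2 / (2 * μ)) :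
    z = x + μ • a := by
  have hloc : IsLocalMin (fun y => g y + ‖y - z‖ ^ 2 * (2 * μ)⁻¹) x :=
    Filter.Eventually.of_forall (by simpa only [div_eq_mul_inv] using hmin)
  have hderiv := (hasGradientAt_iff_hasFDerivAt.mp ha).add
    (((hasFDerivAt_id x).sub_const z).norm_sq.mul_const (2 * μ)⁻¹)
  have hzero := hloc.hasFDerivAt_eq_zero hderiv
  have key : ∀ d, ⟪x + μ • a - z, d⟫ = 0 := fun d => by
    have := congrArg (· d) hzero
    simp only [mul_inv_rev, id_eq, map_sub, ContinuousLinearMap.comp_id, add_apply,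
      InnerProductSpace.toDual_apply_apply, smul_apply, sub_apply, coe_innerSL_apply,
      nsmul_eq_mul, Nat.cast_ofNat, smul_eq_mul, zero_apply] at this
    rw [inner_sub_left, inner_add_left, real_inner_smul_left]
    field_simp at this
    linear_combination this
  exact (sub_eq_zero.mp (inner_self_eq_zero.mp (key _))).symm

end InnerProductSpace

namespace IsMoreau

variable {n : ℕ} {φ : En n → EReal} {μ : ℝ} {Mφ : En n → ℝ} {xφ : En n → En n}

theorem apply_prox (h : IsMoreau φ μ Mφ xφ) (z : En n) :
    φ (xφ z) = ((Mφ z - ‖xφ z - z‖ ^ 2 / (2 * μ) : ℝ) : EReal) := by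
  rw [EReal.coe_sub, (h z).1, EReal.add_sub_cancel_right]

theorem apply_ne_bot (h : IsMoreau φ μ Mφ xφ) (x : En n) : φ x ≠ ⊥ := by
  intro hbot
  have := (h x).2.1 x
  rw [hbot, EReal.bot_add] at this
  exact EReal.coe_ne_bot _ (le_bot_iff.mp this)

theorem le_of_apply_eq (h : IsMoreau φ μ Mφ xφ) {x : En n} {q : ℝ} (hq : φ x = q) (z : En n) :
    Mφ z ≤ q + ‖x - z‖ ^ 2 / (2 * μ) := by
  have := (h z).2.1 x
  rwa [hq, ← EReal.coe_add, EReal.coe_le_coe_iff] at this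

theorem le_add_inner_add (h : IsMoreau φ μ Mφ xφ) (zbar z : En n) :
    Mφ z ≤ Mφ zbar + ⟪μ⁻¹ • (zbar - xφ zbar), z - zbar⟫ + ‖z - zbar‖ ^ 2 / (2 * μ) := by
  have hsq : ‖xφ zbar - z‖ ^ 2 =
      ‖zbar - xφ zbar‖ ^ 2 + 2 * ⟪zbar - xφ zbar, z - zbar⟫ + ‖z - zbar‖ ^ 2 := by
    rw [← norm_add_sq_real, ← norm_neg]; congr 2; abel
  calc Mφ z ≤ (Mφ zbar - ‖xφ zbar - zbar‖ ^ 2 / (2 * μ)) + ‖xφ zbar - z‖ ^ 2 / (2 * μ) :=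
        h.le_of_apply_eq (h.apply_prox zbar) z
    _ = Mφ zbar + ⟪μ⁻¹ • (zbar - xφ zbar), z - zbar⟫ + ‖z - zbar‖ ^ 2 / (2 * μ) := by
        rw [real_inner_smul_left, hsq, norm_sub_rev (xφ zbar) zbar]; ring

end IsMoreau

namespace IsMoreauR

variable {n : ℕ} {g : En n → ℝ} {μ : ℝ} {Mg : En n → ℝ} {xg : En n → En n}

theorem add_inner_sub_le (h : IsMoreauR g μ Mg xg) (hμ : 0 < μ) {ξ x : En n}
    (hξ : ConvexSubgradAt g ξ x) (z : En n) :
    g x + ⟪ξ, z - x⟫ - μ / 2 * ‖ξ‖ ^ 2 ≤ Mg z := by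
  have hyoung := real_inner_le_young hμ ξ (z - xg z)
  have hsub := hξ (xg z)
  rw [(h z).1, norm_sub_rev]
  have : ⟪ξ, z - x⟫ = ⟪ξ, xg z - x⟫ + ⟪ξ, z - xg z⟫ := by
    rw [← inner_add_right]; congr 1; abel
  linarith

theorem convexSubgradAt (h : IsMoreauR g μ Mg xg) (hμ : 0 < μ) {ξ zbar : En n}
    (hξ : ConvexSubgradAt g ξ (xg zbar)) (hzbar : zbar = xg zbar + μ • ξ) :
    ConvexSubgradAt Mg ξ zbar := by
  intro z
  have hlow := h.add_inner_sub_le hμ hξ z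
  have hstep : zbar - xg zbar = μ • ξ := sub_eq_iff_eq_add'.mpr hzbar
  have hval : Mg zbar = g (xg zbar) + μ / 2 * ‖ξ‖ ^ 2 := by
    rw [(h zbar).1, norm_sub_rev, hstep, norm_smul, Real.norm_of_nonneg hμ.le]
    field_simp
  have hinner : ⟪ξ, z - xg zbar⟫ = ⟪ξ, z - zbar⟫ + μ * ‖ξ‖ ^ 2 := by
    rw [← real_inner_self_eq_norm_sq, ← real_inner_smul_right, ← hstep, ← inner_add_right]
    congr 1; abel
  linarith

theorem eq_prox_add_smul (h : IsMoreauR g μ Mg xg) (hμ : μ ≠ 0) {a z : En n}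
    (ha : HasGradientAt g a (xg z)) : z = xg z + μ • a :=
  ha.eq_add_smul_of_forall_le hμ fun y => by linarith [(h z).1, (h z).2.1 y]

end IsMoreauR

namespace IsMoreau

variable {n : ℕ} {φ : En n → EReal} {g : En n → ℝ} {μ : ℝ} {Mφ Mg : En n → ℝ}
  {xφ xg : En n → En n}

theorem prox_sub_le (hφ : IsMoreau φ μ Mφ xφ) (hg : IsMoreauR g μ Mg xg) (z : En n) :
    φ (xφ z) - g (xφ z) ≤ ((Mφ z - Mg z : ℝ) : EReal) := by
  rw [hφ.apply_prox z, ← EReal.coe_sub, EReal.coe_le_coe_iff]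
  linarith [(hg z).2.1 (xφ z)]

theorem envelope_sub_le (hφ : IsMoreau φ μ Mφ xφ) (hg : IsMoreauR g μ Mg xg) (hμ : 0 < μ)
    (hgc : ConvexOn ℝ univ g) {a x : En n} (ha : HasGradientAt g a x) :
    ((Mφ (x + μ • a) - Mg (x + μ • a) : ℝ) : EReal) ≤ φ x - g x := by
  by_cases htop : φ x = ⊤
  · simp [htop]
  obtain ⟨q, hq⟩ : ∃ q : ℝ, φ x = q := ⟨_, (EReal.coe_toReal htop (hφ.apply_ne_bot x)).symm⟩
  have hup := hφ.le_of_apply_eq hq (x + μ • a)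
  have hlow := hg.add_inner_sub_le hμ (hgc.add_inner_le_of_hasGradientAt ha) (x + μ • a)
  rw [hq, ← EReal.coe_sub, EReal.coe_le_coe_iff]
  simp only [sub_add_cancel_left, norm_neg, norm_smul, Real.norm_of_nonneg hμ.le,
    add_sub_cancel_left, real_inner_smul_right, real_inner_self_eq_norm_sq] at hup hlow
  have : (μ * ‖a‖) ^ 2 / (2 * μ) = μ / 2 * ‖a‖ ^ 2 := by field_simp
  linarith

theorem prox_eq_of_isLocalMin (hφ : IsMoreau φ μ Mφ xφ) (hg : IsMoreauR g μ Mg xg) (hμ : 0 < μ)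
    (hgc : ConvexOn ℝ univ g) {a zbar : En n} {r : ℝ} (ha : HasGradientAt g a (xg zbar))
    (hr : 0 < r) (hloc : ∀ z, ‖z - zbar‖ ≤ r → Mφ zbar - Mg zbar ≤ Mφ z - Mg z) :
    xφ zbar = xg zbar := by
  have hzbar := hg.eq_prox_add_smul hμ.ne' ha
  have hsub := hg.convexSubgradAt hμ (hgc.add_inner_le_of_hasGradientAt ha) hzbar
  have hcrit : μ⁻¹ • (zbar - xφ zbar) - a = 0 :=
    eq_zero_of_forall_norm_le_inner_add_sq (C := (2 * μ)⁻¹) hr fun d hd => by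
      have h1 := hloc (zbar + d) (by rwa [add_sub_cancel_left])
      have h2 := hφ.le_add_inner_add zbar (zbar + d)
      have h3 := hsub (zbar + d)
      rw [add_sub_cancel_left] at h2 h3
      rw [inner_sub_left, ← div_eq_inv_mul]
      linarith
  rw [sub_eq_zero, inv_smul_eq_iff₀ hμ.ne'] at hcrit
  calc xφ zbar = zbar - μ • a := by rw [← hcrit, sub_sub_cancel]
    _ = xg zbar := sub_eq_of_eq_add hzbar

end IsMoreau

theorem stmt7_general {n : ℕ} (φ : En n → EReal) (g : En n → ℝ) (μ : ℝ)
    (hg : ConvexOn ℝ Set.univ g)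
    (hμ : 0 < μ)
    (Mφ : En n → ℝ) (xφ : En n → En n) (hφprox : IsMoreau φ μ Mφ xφ)
    (Mg : En n → ℝ) (xg : En n → En n) (hgprox : IsMoreauR g μ Mg xg)
    (Lg : ℝ) (hLg : 0 ≤ Lg) (g' : En n → En n)
    (hgdiff : ∀ x, HasGradientAt g (g' x) x)
    (hgLip : ∀ x y, ‖g' x - g' y‖ ≤ Lg * ‖x - y‖)
    (zbar : En n) (r : ℝ) (hr : 0 < r)
    (hloc : ∀ z : En n, ‖z - zbar‖ ≤ r → Mφ zbar - Mg zbar ≤ Mφ z - Mg z) :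
    ∀ x : En n, ‖x - xφ zbar‖ ≤ r / (μ * Lg + 1) →
      φ (xφ zbar) - ((g (xφ zbar) : ℝ) : EReal) ≤ φ x - ((g x : ℝ) : EReal) := by
  intro x hx
  have hprox : xφ zbar = xg zbar := hφprox.prox_eq_of_isLocalMin hgprox hμ hg (hgdiff _) hr hloc
  have hzbar : zbar = xφ zbar + μ • g' (xφ zbar) :=
    hprox ▸ hgprox.eq_prox_add_smul hμ.ne' (hgdiff _)
  have hnear : ‖x + μ • g' x - zbar‖ ≤ r := by
    rw [hzbar]
    calc _ ≤ (μ * Lg + 1) * ‖x - xφ zbar‖ := norm_add_smul_sub_add_smul_le hμ.le hgLip _ _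
      _ ≤ r := (le_div_iff₀' (by positivity)).mp hx
  calc φ (xφ zbar) - g (xφ zbar) ≤ ((Mφ zbar - Mg zbar : ℝ) : EReal) :=
        hφprox.prox_sub_le hgprox zbar
    _ ≤ ((Mφ (x + μ • g' x) - Mg (x + μ • g' x) : ℝ) : EReal) :=
        EReal.coe_le_coe_iff.mpr (hloc _ hnear)
    _ ≤ φ x - g x := hφprox.envelope_sub_le hgprox hμ hg (hgdiff x)

/-- if `z̄` is a local minimizer of `F_μ` on the ball of radius `r`
and `g` has an `L_g`-Lipschitz gradient, then `x_{μφ}(z̄)` is a local minimizer of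
`F` on the ball of radius `r/(μ L_g + 1)`. -/
theorem stmt7 {n : ℕ} (φ : En n → EReal) (g : En n → ℝ) (mφ μ : ℝ)
    (hproper : ProperE φ) (hlsc : LowerSemicontinuous φ)
    (hmφ : 0 ≤ mφ) (hweak : WeaklyConvexOn φ mφ)
    (hg : ConvexOn ℝ Set.univ g)
    (hμ : 0 < μ) (hμm : μ * mφ < 1)
    (Fstar : ℝ)
    (hmin : ∃ xs : En n, φ xs - ((g xs : ℝ) : EReal) = (Fstar : EReal) ∧
      ∀ x, (Fstar : EReal) ≤ φ x - ((g x : ℝ) : EReal))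
    (Mφ : En n → ℝ) (xφ : En n → En n) (hφprox : IsMoreau φ μ Mφ xφ)
    (Mg : En n → ℝ) (xg : En n → En n) (hgprox : IsMoreauR g μ Mg xg)
    (Lg : ℝ) (hLg : 0 ≤ Lg) (g' : En n → En n)
    (hgdiff : ∀ x, HasGradientAt g (g' x) x)
    (hgLip : ∀ x y, ‖g' x - g' y‖ ≤ Lg * ‖x - y‖)
    (zbar : En n) (r : ℝ) (hr : 0 < r)
    (hloc : ∀ z : En n, ‖z - zbar‖ ≤ r → Mφ zbar - Mg zbar ≤ Mφ z - Mg z) :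
    ∀ x : En n, ‖x - xφ zbar‖ ≤ r / (μ * Lg + 1) →
      φ (xφ zbar) - ((g (xφ zbar) : ℝ) : EReal) ≤ φ x - ((g x : ℝ) : EReal) :=
  stmt7_general φ g μ hg hμ Mφ xφ hφprox Mg xg hgprox Lg hLg g' hgdiff hgLip zbar r hr hloc
end
end

section
/- Let 0 < μ < 1/m_φ and assume F attains a finite minimal value F*. If F is level-bounded and dom φ = ℝⁿ (i.e., φ is finite everywhere), then F_μ is level-bounded. -/
open scoped RealInnerProductSpace

noncomputable section

/-- An extended-real-valued function is level-bounded if all its sublevel sets are bounded. -/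
def LevelBoundedE {n : ℕ} (H : En n → EReal) : Prop :=
  ∀ α : ℝ, Bornology.IsBounded {x : En n | H x ≤ (α : EReal)}

/-- A real-valued function is level-bounded if all its sublevel sets are bounded. -/
def LevelBoundedR {n : ℕ} (H : En n → ℝ) : Prop :=
  ∀ α : ℝ, Bornology.IsBounded {x : En n | H x ≤ α}

/-! Let `x` and `y` be the proximal points of `φ` and `g` at `z`. Optimality of `y` makes
`μ⁻¹ • (z - y)` a subgradient of the convex `g` at `y`, and this yields
`F x + ‖x - y‖² / (2μ) ≤ F_μ z`. On a sublevel set of `F_μ` the points `x` therefore stay in a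
sublevel set of `F`, the points `y` within `√(2μ(α - F*))` of them, and `z - y` is `μ` times a
subgradient of the continuous function `g` on a bounded set, which is bounded. -/

open Set Filter Topology Metric Bornology

lemma nonpos_of_forall_le_mul {a b : ℝ} (h : ∀ t ∈ Ioc (0 : ℝ) 1, a ≤ t * b) : a ≤ 0 := by
  have hlim : Tendsto (fun t : ℝ => t * b) (𝓝[>] 0) (𝓝 0) := by
    simpa using ((continuous_mul_const b).tendsto 0).mono_left nhdsWithin_le_nhds
  exact ge_of_tendsto hlim (eventually_of_mem (Ioc_mem_nhdsGT one_pos) h)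

section Prox

variable {E : Type*} [NormedAddCommGroup E] [InnerProductSpace ℝ E] {g : E → ℝ} {μ : ℝ}

lemma ConvexOn.add_inner_le_of_isMinOn_prox (hg : ConvexOn ℝ univ g) (hμ : 0 < μ) {y z : E}
    (hy : IsMinOn (fun w => g w + ‖w - z‖ ^ 2 / (2 * μ)) univ y) (w : E) :
    g y + ⟪μ⁻¹ • (z - y), w - y⟫ ≤ g w := by
  have hinner : ⟪μ⁻¹ • (z - y), w - y⟫ = -(⟪y - z, w - y⟫ / μ) := by
    rw [real_inner_smul_left, ← neg_sub y z, inner_neg_left]; ring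
  rw [hinner, ← sub_nonpos]
  refine nonpos_of_forall_le_mul (b := ‖w - y‖ ^ 2 / (2 * μ)) fun t ⟨ht0, ht1⟩ =>
    le_of_mul_le_mul_left ?_ ht0
  have hmin : g y + ‖y - z‖ ^ 2 / (2 * μ) ≤
      g (y + t • (w - y)) + ‖y + t • (w - y) - z‖ ^ 2 / (2 * μ) :=
    hy (mem_univ _)
  have hconv : g (y + t • (w - y)) ≤ (1 - t) * g y + t * g w := by
    have := hg.2 (mem_univ y) (mem_univ w) (sub_nonneg.2 ht1) ht0.le (by ring)
    rwa [show (1 - t) • y + t • w = y + t • (w - y) by module, smul_eq_mul, smul_eq_mul] at this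
  have hsq : ‖y + t • (w - y) - z‖ ^ 2 / (2 * μ) = ‖y - z‖ ^ 2 / (2 * μ) +
      t * (⟪y - z, w - y⟫ / μ) + t * (t * (‖w - y‖ ^ 2 / (2 * μ))) := by
    rw [show y + t • (w - y) - z = (y - z) + t • (w - y) by abel, norm_add_sq_real,
      real_inner_smul_right, norm_smul, mul_pow, Real.norm_eq_abs, sq_abs]
    field_simp
  linarith

/-- Quadratic growth of the proximal objective at a point where the optimality condition holds. -/
lemma add_sq_div_le_of_add_inner_le (hμ : 0 < μ) {x y z : E}
    (hsub : g y + ⟪μ⁻¹ • (z - y), x - y⟫ ≤ g x) :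
    g y + ‖y - z‖ ^ 2 / (2 * μ) + ‖x - y‖ ^ 2 / (2 * μ) ≤ g x + ‖x - z‖ ^ 2 / (2 * μ) := by
  have hsq : ‖x - z‖ ^ 2 / (2 * μ) = ‖x - y‖ ^ 2 / (2 * μ) + ‖y - z‖ ^ 2 / (2 * μ) -
      ⟪μ⁻¹ • (z - y), x - y⟫ := by
    rw [show x - z = (x - y) - (z - y) by abel, norm_sub_sq_real, real_inner_smul_left,
      real_inner_comm, ← neg_sub z y, norm_neg]
    field_simp
    ring
  linarith

lemma norm_mul_le_of_add_inner_le {y v : E} {r K : ℝ} (hr : 0 < r)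
    (hv : ∀ w, g y + ⟪v, w - y⟫ ≤ g w) (hK : ∀ w ∈ closedBall y r, g w ≤ g y + K) :
    r * ‖v‖ ≤ K := by
  set w := y + (r * ‖v‖⁻¹) • v
  have hinner : ⟪v, w - y⟫ = r * ‖v‖ := by
    rw [add_sub_cancel_left, real_inner_smul_right, real_inner_self_eq_norm_sq, sq,
      mul_assoc, ← mul_assoc ‖v‖⁻¹, inv_mul_mul_self]
  have hw : w ∈ closedBall y r := by
    rw [mem_closedBall, dist_eq_norm, add_sub_cancel_left, norm_smul, Real.norm_eq_abs,
      abs_of_nonneg (by positivity), mul_assoc]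
    exact mul_le_of_le_one_right hr.le (inv_mul_le_one_of_le₀ le_rfl (norm_nonneg v))
  linarith [hv w, hK w hw]

lemma Continuous.exists_bound_of_add_inner_le [ProperSpace E] (hg : Continuous g) {C : Set E}
    (hC : IsBounded C) :
    ∃ L, ∀ y ∈ C, ∀ v, (∀ w, g y + ⟪v, w - y⟫ ≤ g w) → ‖v‖ ≤ L := by
  obtain ⟨K, hK⟩ := (isCompact_of_isClosed_isBounded isClosed_cthickening
    (hC.cthickening (δ := 1))).exists_bound_of_continuousOn hg.continuousOn
  refine ⟨2 * K, fun y hy v hv => ?_⟩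
  have hball : ∀ w ∈ closedBall y 1, g w ≤ g y + 2 * K := fun w hw => by
    have hyw := abs_le.1 (hK y (self_subset_cthickening C hy))
    have hw := abs_le.1 (hK w (closedBall_subset_cthickening hy 1 hw))
    linarith
  simpa using norm_mul_le_of_add_inner_le one_pos hv hball

theorem isBounded_sublevel_envelope_sub [FiniteDimensional ℝ E] {f Mf Mg : E → ℝ}
    {xf xg : E → E}
    (hg : ConvexOn ℝ univ g) (hμ : 0 < μ) {Fstar : ℝ} (hlow : ∀ x, Fstar ≤ f x - g x)
    (hF : ∀ α, IsBounded {x | f x - g x ≤ α})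
    (hMf : ∀ z, Mf z = f (xf z) + ‖xf z - z‖ ^ 2 / (2 * μ))
    (hMg : ∀ z, Mg z = g (xg z) + ‖xg z - z‖ ^ 2 / (2 * μ))
    (hxg : ∀ z, IsMinOn (fun w => g w + ‖w - z‖ ^ 2 / (2 * μ)) univ (xg z)) (α : ℝ) :
    IsBounded {z | Mf z - Mg z ≤ α} := by
  set δ := √(2 * μ * (α - Fstar))
  set C := cthickening δ {x | f x - g x ≤ α}
  have hC : IsBounded C := (hF α).cthickening
  obtain ⟨L, hL⟩ :=
    (continuousOn_univ.1 (hg.continuousOn isOpen_univ)).exists_bound_of_add_inner_le hC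
  refine (hC.cthickening (δ := μ * L)).subset fun z hz => ?_
  set x := xf z
  set y := xg z
  have hsub := hg.add_inner_le_of_isMinOn_prox hμ (hxg z)
  have hx : f x - g x + ‖x - y‖ ^ 2 / (2 * μ) ≤ α := by
    have hgrowth := add_sq_div_le_of_add_inner_le hμ (hsub x)
    have hz : Mf z - Mg z ≤ α := hz
    rw [hMf, hMg] at hz
    linarith
  have hsq : 0 ≤ ‖x - y‖ ^ 2 / (2 * μ) := by positivity
  have hyC : y ∈ C := by
    refine mem_cthickening_of_dist_le y x δ _ (show f x - g x ≤ α by linarith) ?_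
    rw [dist_comm, dist_eq_norm]
    refine Real.le_sqrt_of_sq_le ?_
    have hxy : ‖x - y‖ ^ 2 / (2 * μ) ≤ α - Fstar := by linarith [hlow x]
    rwa [div_le_iff₀ (by positivity), mul_comm] at hxy
  refine mem_cthickening_of_dist_le z y _ C hyC ?_
  calc dist z y = μ * ‖μ⁻¹ • (z - y)‖ := by
        rw [norm_smul, norm_inv, Real.norm_eq_abs, abs_of_pos hμ, mul_inv_cancel_left₀ hμ.ne',
          dist_eq_norm]
    _ ≤ μ * L := by gcongr; exact hL y hyC _ hsub

end Prox

lemma IsMoreauR.isMinOn {n : ℕ} {g Mg : En n → ℝ} {μ : ℝ} {xg : En n → En n}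
    (h : IsMoreauR g μ Mg xg) (z : En n) :
    IsMinOn (fun w => g w + ‖w - z‖ ^ 2 / (2 * μ)) univ (xg z) :=
  isMinOn_iff.2 fun w _ => (h z).1 ▸ (h z).2.1 w

theorem stmt12_general {n : ℕ} (φ : En n → EReal) (g : En n → ℝ) (μ : ℝ)
    (hg : ConvexOn ℝ Set.univ g)
    (hμ : 0 < μ)
    (Fstar : ℝ)
    (hmin : ∃ xs : En n, φ xs - ((g xs : ℝ) : EReal) = (Fstar : EReal) ∧
      ∀ x, (Fstar : EReal) ≤ φ x - ((g x : ℝ) : EReal))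
    (Mφ : En n → ℝ) (xφ : En n → En n) (hφprox : IsMoreau φ μ Mφ xφ)
    (Mg : En n → ℝ) (xg : En n → En n) (hgprox : IsMoreauR g μ Mg xg)
    (hFlb : LevelBoundedE (fun x => φ x - ((g x : ℝ) : EReal)))
    (hdom : ∀ x : En n, φ x ≠ ⊤) :
    LevelBoundedR (fun z => Mφ z - Mg z) := by
  obtain ⟨-, -, hFstar⟩ := hmin
  have hbot (x : En n) : φ x ≠ ⊥ := fun hx => by simpa [hx] using hFstar x
  set f : En n → ℝ := fun x => (φ x).toReal
  have hφ (x : En n) : φ x = f x := (EReal.coe_toReal (hdom x) (hbot x)).symm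
  have hF (x : En n) : φ x - g x = ((f x - g x : ℝ) : EReal) := by rw [hφ, EReal.coe_sub]
  intro α
  refine isBounded_sublevel_envelope_sub hg hμ (Fstar := Fstar) (f := f) (xf := xφ)
    (fun x => ?_) (fun α => ?_) (fun z => ?_) (fun z => (hgprox z).1) hgprox.isMinOn α
  · simpa only [hF, EReal.coe_le_coe_iff] using hFstar x
  · simpa only [hF, EReal.coe_le_coe_iff] using hFlb α
  · have hMφ := (hφprox z).1
    rwa [hφ, ← EReal.coe_add, EReal.coe_eq_coe_iff] at hMφ

/-- if `F` is level-bounded and `dom φ = ℝⁿ` then `F_μ` is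
level-bounded. -/
theorem stmt12 {n : ℕ} (φ : En n → EReal) (g : En n → ℝ) (mφ μ : ℝ)
    (hproper : ProperE φ) (hlsc : LowerSemicontinuous φ)
    (hmφ : 0 ≤ mφ) (hweak : WeaklyConvexOn φ mφ)
    (hg : ConvexOn ℝ Set.univ g)
    (hμ : 0 < μ) (hμm : μ * mφ < 1)
    (Fstar : ℝ)
    (hmin : ∃ xs : En n, φ xs - ((g xs : ℝ) : EReal) = (Fstar : EReal) ∧
      ∀ x, (Fstar : EReal) ≤ φ x - ((g x : ℝ) : EReal))
    (Mφ : En n → ℝ) (xφ : En n → En n) (hφprox : IsMoreau φ μ Mφ xφ)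
    (Mg : En n → ℝ) (xg : En n → En n) (hgprox : IsMoreauR g μ Mg xg)
    (hFlb : LevelBoundedE (fun x => φ x - ((g x : ℝ) : EReal)))
    (hdom : ∀ x : En n, φ x ≠ ⊤) :
    LevelBoundedR (fun z => Mφ z - Mg z) :=
  stmt12_general φ g μ hg hμ Fstar hmin Mφ xφ hφprox Mg xg hgprox hFlb hdom
end
end
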